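/- arXiv:2001.04389 — 3 statements merged into one kernel-verified Lean document; each statement's English description precedes it below -/
import Mathlib

section
/- Let n ≥ 2, let T = (T_{ab}^c) be a torsion-type tensor and let C₁,…,Cₙ be real numbers. Then the n-th compatibility equation, namely Σ_{a<b, c} σ_{ab;n}^c(y)·T_{ab}^c = 2·Σ_{j=1}^n C_j·y_j for all y ∈ ℝⁿ, holds if and only if Cₙ = 0 and T_{an}^n = Cₐ for every a ∈ {1,…,n−1}. -/
open Finset

/-- The last index `n` of `{1,…,n}`, realized as the final element of `Fin n`. -/
def lastIdx (n : ℕ) (hn : 1 ≤ n) : Fin n := ⟨n - 1, by omega⟩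

/-- The coefficient `σ_{ab;i}^c(y) = (δᵢᶜyₐ + δᵢᵃy_c)δ_bⁿ + (δᵢᵇyₐ − δᵢᵃy_b)δ_cⁿ` of the
torsion component `T_{ab}^c` in the `i`-th compatibility equation of a Randers metric. -/
noncomputable def sigma (n : ℕ) (hn : 1 ≤ n) (a b c i : Fin n) (y : Fin n → ℝ) : ℝ :=
  ((if i = c then (1 : ℝ) else 0) * y a + (if i = a then (1 : ℝ) else 0) * y c) *
      (if b = lastIdx n hn then (1 : ℝ) else 0) +
    ((if i = b then (1 : ℝ) else 0) * y a - (if i = a then (1 : ℝ) else 0) * y b) *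
      (if c = lastIdx n hn then (1 : ℝ) else 0)

/-- A torsion-type tensor: a family `T_{ab}^c` of reals, skew-symmetric in the lower
indices. -/
def IsSkew (n : ℕ) (T : Fin n → Fin n → Fin n → ℝ) : Prop :=
  ∀ a b c, T a b c = - T b a c

/-- The left-hand side `Σ_{a<b, c} σ_{ab;i}^c(y)·T_{ab}^c` of the `i`-th compatibility
equation. -/
noncomputable def compatLHS (n : ℕ) (hn : 1 ≤ n) (T : Fin n → Fin n → Fin n → ℝ)
    (i : Fin n) (y : Fin n → ℝ) : ℝ :=
  ∑ a : Fin n, ∑ b : Fin n, ∑ c : Fin n,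
    if a < b then sigma n hn a b c i y * T a b c else 0

/-- the `n`-th compatibility equation
`Σ_{a<b,c} σ_{ab;n}^c(y)·T_{ab}^c = 2·Σ_j C_j·y_j` (for all `y`) holds if and only if
`Cₙ = 0` and `T_{an}^n = Cₐ` for every `a < n`. -/
theorem nth_equation_solvability (n : ℕ) (hn : 2 ≤ n) (T : Fin n → Fin n → Fin n → ℝ)
    (hT : IsSkew n T) (C : Fin n → ℝ) :
    (∀ y : Fin n → ℝ,
        compatLHS n (by omega) T (lastIdx n (by omega)) y = 2 * ∑ j : Fin n, C j * y j) ↔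
      (C (lastIdx n (by omega)) = 0 ∧
        ∀ a : Fin n, a < lastIdx n (by omega) →
          T a (lastIdx n (by omega)) (lastIdx n (by omega)) = C a) := by
  have hn1 : 1 ≤ n := by omega
  set N := lastIdx n hn1 with hNdef
  have hleN : ∀ a : Fin n, a ≤ N := by
    intro a
    simp only [hNdef, lastIdx, Fin.le_def]
    omega
  have lhs_eq : ∀ y : Fin n → ℝ,
      compatLHS n hn1 T N y = ∑ a : Fin n, (if a < N then 2 * y a * T a N N else 0) := by
    intro y
    unfold compatLHS
    have key : ∀ a b c : Fin n,
        (if a < b then sigma n hn1 a b c N y * T a b c else 0)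
          = if c = N then (if b = N then (if a < b then 2 * y a * T a N N else 0) else 0)
            else 0 := by
      intro a b c
      by_cases hab : a < b
      · have haN : N ≠ a := by
          intro h
          exact absurd (hleN b) (not_le.mpr (h ▸ hab))
        simp only [sigma, ← hNdef, if_neg haN, if_pos hab]
        by_cases hb : b = N <;> by_cases hc : c = N
        · subst hb; subst hc
          split_ifs <;> first | ring | simp_all
        · subst hb
          rw [if_neg hc, if_neg hc, if_neg (fun h => hc h.symm), if_pos rfl]
          ring
        · subst hc
          rw [if_pos rfl, if_neg hb, if_neg hb, if_neg (fun h => hb h.symm)]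
          simp
        · rw [if_neg hc, if_neg hc, if_neg hb, if_neg (fun h => hc h.symm),
            if_neg (fun h => hb h.symm)]
          ring
      · simp [hab]
    simp only [key]
    simp [Finset.sum_ite_eq']
  constructor
  · intro h
    have h' : ∀ j : Fin n,
        (if j < N then 2 * T j N N else 0) = 2 * C j := by
      intro j
      have hj := (lhs_eq (fun k => if k = j then (1 : ℝ) else 0)).symm.trans
        (h (fun k => if k = j then (1 : ℝ) else 0))
      have e1 : ∀ a : Fin n,
          (if a < N then 2 * (if a = j then (1 : ℝ) else 0) * T a N N else 0)
            = if a = j then (if a < N then 2 * T a N N else 0) else 0 := by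
        intro a; split_ifs <;> simp_all
      rw [Finset.sum_congr rfl fun a _ => e1 a] at hj
      simpa [Finset.sum_ite_eq', mul_ite] using hj
    have hCN : C N = 0 := by
      have := h' N
      simp at this
      linarith
    refine ⟨hCN, fun a ha => ?_⟩
    have := h' a
    rw [if_pos ha] at this
    linarith
  · rintro ⟨h1, h2⟩ y
    rw [show compatLHS n (by omega : 1 ≤ n) T (lastIdx n (by omega)) y
        = compatLHS n hn1 T N y from rfl, lhs_eq, Finset.mul_sum]
    refine Finset.sum_congr rfl fun a _ => ?_
    by_cases ha : a < N
    · rw [if_pos ha, h2 a ha]; ring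
    · have haN : a = N := le_antisymm (hleN a) (not_lt.mp ha)
      rw [if_neg ha, haN, h1]; ring
end

section
/- Let n ≥ 3, let T = (T_{ab}^c) be a torsion-type tensor, let C = (C_{j;i}) be a real n×n matrix, and let k < i < n be indices. If both the i-th and the k-th compatibility equations hold, i.e. Σ_{a<b, c} σ_{ab;i}^c(y)·T_{ab}^c = 2·Σ_j C_{j;i}·y_j and Σ_{a<b, c} σ_{ab;k}^c(y)·T_{ab}^c = 2·Σ_j C_{j;k}·y_j for all y ∈ ℝⁿ, then T_{in}^k + T_{kn}^i = C_{k;i} + C_{i;k} and T_{ki}^n = C_{k;i} − C_{i;k}. -/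
open Finset

lemma sum4 (n : ℕ) (T : Fin n → Fin n → Fin n → ℝ) (p q r : Fin n) :
    (∑ a : Fin n, ∑ b : Fin n, ∑ c : Fin n,
      if a = p ∧ b = q ∧ c = r ∧ a < b then T a b c else 0)
    = if p < q then T p q r else 0 := by
  simp only [ite_and]
  rw [Finset.sum_eq_single p (fun a _ ha => by simp [ha]) (by simp),
      Finset.sum_eq_single q (fun b _ hb => by simp [hb]) (by simp),
      Finset.sum_eq_single r (fun c _ hc => by simp [hc]) (by simp)]
  simp

set_option maxHeartbeats 1000000 in
lemma compat_delta (n : ℕ) (hn : 1 ≤ n) (T : Fin n → Fin n → Fin n → ℝ) (i j : Fin n)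
    (hi : i < lastIdx n hn) (hj : j < lastIdx n hn) :
    compatLHS n hn T i (fun m => if m = j then (1:ℝ) else 0)
    = T j (lastIdx n hn) i + T i (lastIdx n hn) j
      + (if j < i then T j i (lastIdx n hn) else 0)
      - (if i < j then T i j (lastIdx n hn) else 0) := by
  obtain ⟨N, hgen⟩ : ∃ N, lastIdx n hn = N := ⟨_, rfl⟩
  rw [hgen] at hi hj ⊢
  have hiN : i ≠ N := ne_of_lt hi
  have hjN : j ≠ N := ne_of_lt hj
  have key : ∀ a b c : Fin n,
      (if a < b then sigma n hn a b c i (fun m => if m = j then (1:ℝ) else 0) * T a b c else 0)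
      = (if a = j ∧ b = N ∧ c = i ∧ a < b then T a b c else 0)
      + (if a = i ∧ b = N ∧ c = j ∧ a < b then T a b c else 0)
      + ((if a = j ∧ b = i ∧ c = N ∧ a < b then T a b c else 0)
      - (if a = i ∧ b = j ∧ c = N ∧ a < b then T a b c else 0)) := by
    intro a b c
    by_cases hab : a < b
    · rw [if_pos hab]
      simp only [hab, and_true]
      rcases eq_or_ne b N with hb | hb
      · rcases eq_or_ne c N with hc | hc
        · simp [sigma, hgen, hb, hc, hiN, Ne.symm hiN, hjN, Ne.symm hjN]
        · simp only [sigma, hgen, hb]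
          simp [hiN, Ne.symm hiN, Ne.symm hjN, hc]
          split_ifs <;>
            first
              | rfl
              | ring1
              | (exfalso; simp only [Fin.ext_iff, Fin.lt_def] at *; omega)
      · rcases eq_or_ne c N with hc | hc
        · simp only [sigma, hgen, hc]
          simp [hb, hiN]
          split_ifs <;>
            first
              | rfl
              | ring1
              | (exfalso; simp only [Fin.ext_iff, Fin.lt_def] at *; omega)
        · simp [sigma, hgen, hb, hc]
    · simp [hab]
  simp only [compatLHS, key, Finset.sum_add_distrib, Finset.sum_sub_distrib, sum4 n T]
  simp only [hi, hj, if_pos]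
  ring

/-- if the `i`-th and the `k`-th compatibility equations hold for indices
`k < i < n`, then `T_{in}^k + T_{kn}^i = C_{k;i} + C_{i;k}` and
`T_{ki}^n = C_{k;i} − C_{i;k}`. -/
theorem triplet_equations (n : ℕ) (hn : 3 ≤ n) (T : Fin n → Fin n → Fin n → ℝ)
    (hT : IsSkew n T) (C : Fin n → Fin n → ℝ) (k i : Fin n)
    (hki : k < i) (hi : i < lastIdx n (by omega))
    (heqi : ∀ y : Fin n → ℝ,
      compatLHS n (by omega) T i y = 2 * ∑ j : Fin n, C j i * y j)
    (heqk : ∀ y : Fin n → ℝ,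
      compatLHS n (by omega) T k y = 2 * ∑ j : Fin n, C j k * y j) :
    T i (lastIdx n (by omega)) k + T k (lastIdx n (by omega)) i = C k i + C i k ∧
      T k i (lastIdx n (by omega)) = C k i - C i k := by
  
  have hn1 : 1 ≤ n := by omega
  have hi' : i < lastIdx n hn1 := hi
  have hk' : k < lastIdx n hn1 := lt_trans hki hi'
  have h1 := heqi (fun m => if m = k then (1:ℝ) else 0)
  have h2 := heqk (fun m => if m = i then (1:ℝ) else 0)
  rw [compat_delta n hn1 T i k hi' hk'] at h1
  rw [compat_delta n hn1 T k i hk' hi'] at h2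
  simp only [mul_ite, mul_one, mul_zero, Finset.sum_ite_eq', Finset.mem_univ, if_true] at h1 h2
  rw [if_pos hki, if_neg (not_lt.mpr hki.le)] at h1
  rw [if_pos hki, if_neg (not_lt.mpr hki.le)] at h2
  refine ⟨?_, ?_⟩
  · show T i (lastIdx n hn1) k + T k (lastIdx n hn1) i = C k i + C i k
    linarith
  · show T k i (lastIdx n hn1) = C k i - C i k
    linarith
end

section
/- Let n ≥ 1, let γ = (γ_{ij}) be a symmetric invertible real n×n matrix with inverse entries γ^{kr}, and let Γ = (Γ_{ij}^k) and Γ* = (Γ*_{ij}^k) be families of reals indexed by i, j, k ∈ {1,…,n} such that Γ* is symmetric in its lower indices (Γ*_{ij}^k = Γ*_{ji}^k) and both satisfy the same metricity relations: Σ_l (γ_{lk}Γ_{ij}^l + γ_{jl}Γ_{ik}^l) = Σ_l (γ_{lk}Γ*_{ij}^l + γ_{jl}Γ*_{ik}^l) for all i, j, k. Define T_{ij}^k := Γ_{ij}^k − Γ_{ji}^k. Then for all i, j, r: Γ_{ij}^r = Γ*_{ij}^r − (1/2)·Σ_{k,l} (T_{jk}^l·γ^{kr}·γ_{il} + T_{ik}^l·γ^{kr}·γ_{jl})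 + (1/2)·T_{ij}^r. -/
open Finset

/-- Christoffel process: if `Γ` and the symmetric `Γ*` satisfy the same
metricity relations with respect to a symmetric invertible matrix `γ`, then
`Γ_{ij}^r = Γ*_{ij}^r − (1/2)·Σ_{k,l} (T_{jk}^l γ^{kr} γ_{il} + T_{ik}^l γ^{kr} γ_{jl})
  + (1/2)·T_{ij}^r`, where `T_{ij}^k = Γ_{ij}^k − Γ_{ji}^k`. -/
theorem christoffel_process (n : ℕ) (hn : 1 ≤ n)
    (γ : Matrix (Fin n) (Fin n) ℝ) (hsymm : γ.IsSymm) (hdet : IsUnit γ.det)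
    (Γ Γs : Fin n → Fin n → Fin n → ℝ)
    (hΓs : ∀ i j k, Γs i j k = Γs j i k)
    (hmet : ∀ i j k : Fin n,
      (∑ l : Fin n, (γ l k * Γ i j l + γ j l * Γ i k l)) =
        ∑ l : Fin n, (γ l k * Γs i j l + γ j l * Γs i k l))
    (T : Fin n → Fin n → Fin n → ℝ)
    (hT : ∀ i j k, T i j k = Γ i j k - Γ j i k) :
    ∀ i j r : Fin n,
      Γ i j r =
        Γs i j r -
          (1 / 2) * ∑ k : Fin n, ∑ l : Fin n,
            (T j k l * γ⁻¹ k r * γ i l + T i k l * γ⁻¹ k r * γ j l) +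
          (1 / 2) * T i j r := by
  have hsym : ∀ a b, γ a b = γ b a := fun a b => (Matrix.IsSymm.apply hsymm a b).symm
  have hinv_symm : ∀ a b, γ⁻¹ a b = γ⁻¹ b a := by
    intro a b
    have h : γ⁻¹.transpose = γ⁻¹ := by
      rw [Matrix.transpose_nonsing_inv, hsymm]
    have h2 := congrFun (congrFun h a) b
    rw [Matrix.transpose_apply] at h2
    exact h2.symm
  intro i j r
  set D : Fin n → Fin n → Fin n → ℝ := fun a b c => Γ a b c - Γs a b c with hD
  set A : Fin n → Fin n → Fin n → ℝ := fun a b c => ∑ l, γ l c * D a b l with hA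
  set τ : Fin n → Fin n → Fin n → ℝ := fun a b c => ∑ l, γ l c * T a b l with hτ
  -- key inversion lemma
  have key : ∀ v : Fin n → ℝ, (∑ k, γ⁻¹ k r * (∑ l, γ l k * v l)) = v r := by
    intro v
    have hmv : (fun k => ∑ l, γ l k * v l) = γ.mulVec v := by
      funext k
      simp only [Matrix.mulVec, dotProduct]
      exact Finset.sum_congr rfl fun l _ => by rw [hsym l k]
    have h1 : γ⁻¹.mulVec (γ.mulVec v) = v := by
      rw [Matrix.mulVec_mulVec, Matrix.nonsing_inv_mul γ hdet, Matrix.one_mulVec]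
    calc (∑ k, γ⁻¹ k r * (∑ l, γ l k * v l))
        = ∑ k, γ⁻¹ r k * γ.mulVec v k := by
          refine Finset.sum_congr rfl fun k _ => ?_
          rw [hinv_symm k r, ← hmv]
      _ = γ⁻¹.mulVec (γ.mulVec v) r := by
          simp only [Matrix.mulVec, dotProduct]
      _ = v r := by rw [h1]
  -- antisymmetry of A in last two indices
  have hanti : ∀ a b c, A a b c = - A a c b := by
    intro a b c
    have hm := hmet a b c
    have h2 : A a b c + A a c b = 0 := by
      simp only [hA, hD, ← Finset.sum_add_distrib]
      have he : ∑ l, (γ l c * (Γ a b l - Γs a b l) + γ l b * (Γ a c l - Γs a c l))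
          = ∑ l, ((γ l c * Γ a b l + γ b l * Γ a c l)
              - (γ l c * Γs a b l + γ b l * Γs a c l)) := by
        refine Finset.sum_congr rfl fun l _ => ?_
        rw [hsym l b]; ring
      rw [he, Finset.sum_sub_distrib, hm, sub_self]
    linarith
  -- relation of T and D
  have hTD : ∀ a b c, T a b c = D a b c - D b a c := by
    intro a b c
    simp only [hD, hT a b c]
    rw [hΓs b a c]; ring
  have hτA : ∀ a b c, τ a b c = A a b c - A b a c := by
    intro a b c
    simp only [hτ, hA, ← Finset.sum_sub_distrib]
    refine Finset.sum_congr rfl fun l _ => ?_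
    rw [hTD]; ring
  have h2A : ∀ a b c, 2 * A a b c = τ a b c - τ b c a + τ c a b := by
    intro a b c
    have e1 := hτA a b c
    have e2 := hτA b c a
    have e3 := hτA c a b
    have f1 := hanti b a c
    have f2 := hanti c b a
    have f3 := hanti a c b
    linarith
  -- D recovered from A
  have hDrec : D i j r = ∑ k, γ⁻¹ k r * A i j k := (key (D i j)).symm
  have hTrec : T i j r = ∑ k, γ⁻¹ k r * τ i j k := (key (T i j)).symm
  -- main computation
  have e : 2 * D i j r
      = (∑ k, γ⁻¹ k r * τ i j k) - (∑ k, γ⁻¹ k r * τ j k i)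
        + (∑ k, γ⁻¹ k r * τ k i j) := by
    rw [hDrec, Finset.mul_sum, ← Finset.sum_sub_distrib, ← Finset.sum_add_distrib]
    refine Finset.sum_congr rfl fun k _ => ?_
    linear_combination γ⁻¹ k r * h2A i j k
  have eb : ∑ k, γ⁻¹ k r * τ j k i
      = ∑ k, ∑ l, T j k l * γ⁻¹ k r * γ i l := by
    refine Finset.sum_congr rfl fun k _ => ?_
    simp only [hτ, Finset.mul_sum]
    refine Finset.sum_congr rfl fun l _ => ?_
    rw [hsym i l]; ring
  have ec : ∑ k, γ⁻¹ k r * τ k i j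
      = - ∑ k, ∑ l, T i k l * γ⁻¹ k r * γ j l := by
    rw [← Finset.sum_neg_distrib]
    refine Finset.sum_congr rfl fun k _ => ?_
    simp only [hτ, Finset.mul_sum, ← Finset.sum_neg_distrib]
    refine Finset.sum_congr rfl fun l _ => ?_
    have hTk : T k i l = - T i k l := by rw [hT, hT]; ring
    rw [hTk, hsym j l]; ring
  have hsplit : ∑ k : Fin n, ∑ l : Fin n,
      (T j k l * γ⁻¹ k r * γ i l + T i k l * γ⁻¹ k r * γ j l)
      = (∑ k, ∑ l, T j k l * γ⁻¹ k r * γ i l)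
        + (∑ k, ∑ l, T i k l * γ⁻¹ k r * γ j l) := by
    rw [← Finset.sum_add_distrib]
    exact Finset.sum_congr rfl fun k _ => by rw [← Finset.sum_add_distrib]
  have hDval : D i j r = Γ i j r - Γs i j r := rfl
  rw [hsplit] at *
  rw [← hTrec] at e
  linarith [e, eb, ec]
end
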